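/- (Proposition 2) Let n be even and let f, g : 𝔽₂ⁿ → {1,-1} be bent functions such that f ⊕ g is balanced, i.e., Σ_{x∈𝔽₂ⁿ} f(x)·g(x) = 0. If ĝ is the dual of g (ĝ(ω) = 2^{-n/2} W_g(ω) for all ω) and f̂ is the dual of f (f̂(ω) = 2^{-n/2} W_f(ω) for all ω), then Φ_{f,ĝ} = 0 and Φ_{g,f̂} = 0. -/
import Mathlib


open Finset

/-- The sign character `(-1)^(x·y)` where `x·y = Σᵢ xᵢyᵢ` in `𝔽₂`. -/
noncomputable def chi {n : ℕ} (x y : Fin n → ZMod 2) : ℝ :=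
  (-1 : ℝ) ^ (∑ i, x i * y i).val

/-- A function takes values in `{1, -1}`. -/
noncomputable def IsPM {n : ℕ} (f : (Fin n → ZMod 2) → ℝ) : Prop :=
  ∀ x, f x = 1 ∨ f x = -1

/-- The Walsh transform `W_f(ω) = Σ_x f(x)·(-1)^(x·ω)`. -/
noncomputable def walsh {n : ℕ} (f : (Fin n → ZMod 2) → ℝ) (ω : Fin n → ZMod 2) : ℝ :=
  ∑ x, f x * chi x ω

/-- The 2-fold Forrelation `Φ_{f,g} = 2^{-3n/2} Σ_x f(x) W_g(x)`. -/
noncomputable def forr2 {n : ℕ} (f g : (Fin n → ZMod 2) → ℝ) : ℝ :=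
  (2 : ℝ) ^ (-(3 * (n : ℝ)) / 2) * ∑ x, f x * walsh g x

/-- The 3-fold Forrelation. -/
noncomputable def forr3 {n : ℕ} (f₁ f₂ f₃ : (Fin n → ZMod 2) → ℝ) : ℝ :=
  (1 / (2 : ℝ) ^ (2 * n)) *
    ∑ x₁, ∑ x₂, ∑ x₃, f₁ x₁ * chi x₁ x₂ * f₂ x₂ * chi x₂ x₃ * f₃ x₃

/-- The cross-correlation `C_{f,g}(y) = Σ_x f(x)·g(x ⊕ y)`. -/
noncomputable def crossCorr {n : ℕ} (f g : (Fin n → ZMod 2) → ℝ) (y : Fin n → ZMod 2) : ℝ :=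
  ∑ x, f x * g (x + y)

/-- A bent function: `W_f(ω) = ±2^{n/2}` for all `ω`. -/
noncomputable def IsBent {n : ℕ} (f : (Fin n → ZMod 2) → ℝ) : Prop :=
  ∀ ω, walsh f ω = (2 : ℝ) ^ ((n : ℝ) / 2) ∨ walsh f ω = -(2 : ℝ) ^ ((n : ℝ) / 2)

lemma key (a b : ZMod 2) : ((-1:ℝ))^((a+b).val) = (-1)^a.val * (-1)^b.val := by
  rw [ZMod.val_add, ← neg_one_pow_eq_pow_mod_two, pow_add]

lemma chi_comm {n : ℕ} (x y : Fin n → ZMod 2) : chi x y = chi y x := by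
  unfold chi
  rw [show (∑ i, x i * y i) = ∑ i, y i * x i from Finset.sum_congr rfl fun i _ => mul_comm _ _]

lemma chi_add_left {n : ℕ} (x y ω : Fin n → ZMod 2) :
    chi (x + y) ω = chi x ω * chi y ω := by
  unfold chi
  rw [show (∑ i, (x + y) i * ω i) = (∑ i, x i * ω i) + ∑ i, y i * ω i by
    rw [← Finset.sum_add_distrib]; exact Finset.sum_congr rfl fun i _ => by
      simp [add_mul]]
  exact key _ _

/-- chi z as an additive character in the second variable. -/
noncomputable def chiChar {n : ℕ} (z : Fin n → ZMod 2) : AddChar (Fin n → ZMod 2) ℝ where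
  toFun ω := chi z ω
  map_zero_eq_one' := by simp [chi]
  map_add_eq_mul' a b := by
    show chi z (a + b) = chi z a * chi z b
    rw [show chi z (a + b) = chi (a + b) z from chi_comm _ _, chi_add_left,
      chi_comm a z, chi_comm b z]

lemma sum_chi_ne {n : ℕ} (z : Fin n → ZMod 2) (hz : z ≠ 0) : ∑ ω, chi z ω = 0 := by
  have h1 : chiChar z ≠ 1 := by
    obtain ⟨i, hi⟩ := Function.ne_iff.mp hz
    simp only [Pi.zero_apply] at hi
    have hzi : z i = 1 := by
      have : ∀ a : ZMod 2, a ≠ 0 → a = 1 := by decide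
      exact this _ hi
    intro h
    have h2 : chiChar z (Pi.single i 1) = 1 := by rw [h]; rfl
    have h3 : chiChar z (Pi.single i 1) = -1 := by
      show chi z (Pi.single i 1) = -1
      unfold chi
      rw [show (∑ j, z j * (Pi.single i (1:ZMod 2) : Fin n → ZMod 2) j) = z i by
        rw [Finset.sum_eq_single i]
        · simp
        · intro j _ hj; simp [Pi.single_apply, hj]
        · simp]
      rw [hzi, ZMod.val_one]
      norm_num
    rw [h2] at h3; norm_num at h3
  exact AddChar.sum_eq_zero_of_ne_one h1

lemma sum_chi {n : ℕ} (z : Fin n → ZMod 2) :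
    ∑ ω, chi z ω = if z = 0 then (2:ℝ)^n else 0 := by
  split_ifs with h
  · subst h
    simp [chi, Finset.card_univ]
  · exact sum_chi_ne z h

lemma inversion {n : ℕ} (g : (Fin n → ZMod 2) → ℝ) (x : Fin n → ZMod 2) :
    ∑ ω, walsh g ω * chi ω x = (2:ℝ)^n * g x := by
  unfold walsh
  calc ∑ ω, (∑ y, g y * chi y ω) * chi ω x
      = ∑ ω, ∑ y, g y * (chi (y + x) ω) := by
        refine Finset.sum_congr rfl fun ω _ => ?_
        rw [Finset.sum_mul]
        refine Finset.sum_congr rfl fun y _ => ?_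
        rw [chi_add_left, chi_comm ω x, mul_assoc]
    _ = ∑ y, g y * ∑ ω, chi (y + x) ω := by
        rw [Finset.sum_comm]
        exact Finset.sum_congr rfl fun y _ => by rw [Finset.mul_sum]
    _ = (2:ℝ)^n * g x := by
        have hneg : ∀ a : ZMod 2, -a = a := by decide
        have hxx : x + x = 0 := by
          funext i
          exact (by decide : ∀ a : ZMod 2, a + a = 0) (x i)
        rw [Finset.sum_eq_single x]
        · rw [sum_chi, if_pos hxx, mul_comm]
        · intro y _ hy
          rw [sum_chi, if_neg, mul_zero]
          intro h
          apply hy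
          have : y = -x := eq_neg_of_add_eq_zero_left h
          rw [this]; funext i; exact hneg (x i)
        · simp

lemma dual_walsh {n : ℕ} (g ghat : (Fin n → ZMod 2) → ℝ)
    (hghat : ∀ ω, ghat ω = (2 : ℝ) ^ (-(n : ℝ) / 2) * walsh g ω) (x : Fin n → ZMod 2) :
    walsh ghat x = (2:ℝ) ^ (-(n:ℝ)/2) * ((2:ℝ)^n * g x) := by
  unfold walsh
  calc ∑ y, ghat y * chi y x = (2:ℝ)^(-(n:ℝ)/2) * ∑ y, walsh g y * chi y x := by
        rw [Finset.mul_sum]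
        exact Finset.sum_congr rfl fun y _ => by rw [hghat]; ring
    _ = _ := by rw [inversion]

lemma forr2_dual_zero {n : ℕ} (f g ghat : (Fin n → ZMod 2) → ℝ)
    (hbal : ∑ x, f x * g x = 0)
    (hghat : ∀ ω, ghat ω = (2 : ℝ) ^ (-(n : ℝ) / 2) * walsh g ω) :
    forr2 f ghat = 0 := by
  unfold forr2
  rw [show (∑ x, f x * walsh ghat x)
      = ((2:ℝ)^(-(n:ℝ)/2) * (2:ℝ)^n) * ∑ x, f x * g x by
    rw [Finset.mul_sum]
    exact Finset.sum_congr rfl fun x _ => by rw [dual_walsh g ghat hghat]; ring]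
  rw [hbal]
  ring

theorem forrelation_zero_of_balanced_sum {n : ℕ} (hn : Even n)
    (f g fhat ghat : (Fin n → ZMod 2) → ℝ)
    (hf : IsPM f) (hg : IsPM g) (hbf : IsBent f) (hbg : IsBent g)
    (hbal : ∑ x, f x * g x = 0)
    (hfhat : ∀ ω, fhat ω = (2 : ℝ) ^ (-(n : ℝ) / 2) * walsh f ω)
    (hghat : ∀ ω, ghat ω = (2 : ℝ) ^ (-(n : ℝ) / 2) * walsh g ω) :
    forr2 f ghat = 0 ∧ forr2 g fhat = 0 := by
  refine ⟨forr2_dual_zero f g ghat hbal hghat, forr2_dual_zero g f fhat ?_ hfhat⟩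
  rw [← hbal]
  exact Finset.sum_congr rfl fun x _ => mul_comm _ _
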